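/- Let A = [[1,1],[1,-1]] and B = [[1,1],[1,1]] as 2×2 complex matrices. Then ‖A‖₁ = 2√2, ‖B‖₁ = 2, |Aᵢⱼ| ≤ Bᵢⱼ entrywise, and for every n ≥ 1 the n-fold Kronecker tensor powers satisfy |A^{⊗n}_{ij}| ≤ B^{⊗n}_{ij} entrywise and ‖A^{⊗n}‖₁ = (2√2)^n = 2^{n/2} ‖B^{⊗n}‖₁. -/

import Mathlib

open scoped BigOperators Kronecker ComplexOrder Matrix

/-- The ℓ²→ℓ² operator norm of a square complex matrix. -/
noncomputable def opNorm {n : Type*} [Fintype n] [DecidableEq n] (A : Matrix n n ℂ) : ℝ :=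
  ‖Matrix.toEuclideanCLM (𝕜 := ℂ) A‖

/-- The trace norm (Schatten-1 norm) of a square complex matrix. -/
noncomputable def traceNorm {n : Type*} [Fintype n] [DecidableEq n] (A : Matrix n n ℂ) : ℝ :=
  (((Matrix.posSemidef_conjTranspose_mul_self A).1.eigenvectorUnitary * Matrix.diagonal ((fun x : ℝ => (x : ℂ)) ∘ Real.sqrt ∘ (Matrix.posSemidef_conjTranspose_mul_self A).1.eigenvalues) *
    (star (Matrix.posSemidef_conjTranspose_mul_self A).1.eigenvectorUnitary : Matrix n n ℂ)).trace).re

/-- The `n`-fold tensor (Kronecker) power of a square matrix, realized on `Fin n → Fin d`. -/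
noncomputable def tensorPow {d : ℕ} (A : Matrix (Fin d) (Fin d) ℂ) (n : ℕ) :
    Matrix (Fin n → Fin d) (Fin n → Fin d) ℂ :=
  Matrix.of fun x y => ∏ t, A (x t) (y t)


/-!
The trace norm of `A` is the trace of the positive square root of `Aᴴ * A`, so any positive
semidefinite `N` with `N ^ 2 = Aᴴ * A` computes it. Tensor powers are multiplicative and commute
with `ᴴ`, so `N^{⊗n}` is such a square root for `A^{⊗n}`; as the trace of a tensor power is the
power of the trace, `‖A^{⊗n}‖₁ = ‖A‖₁ ^ n`. For the Hadamard matrix `Aᴴ * A = 2 • 1`, whence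
`‖A‖₁ = 2√2`, while `B = Cᴴ * C` with `C = [[1,1],[0,0]]` is positive semidefinite of trace `2`.
-/

section MatrixOrder

open scoped MatrixOrder

variable {m : Type*} [Fintype m] [DecidableEq m]

theorem traceNorm_eq_re_trace_of_sq_eq {A N : Matrix m m ℂ} (hN : N.PosSemidef)
    (h : N ^ 2 = Aᴴ * A) : traceNorm A = N.trace.re := by
  have hAA := Matrix.posSemidef_conjTranspose_mul_self A
  have hsqrt : CFC.sqrt (Aᴴ * A) = N := h ▸ CFC.sqrt_sq N hN.nonneg
  rw [CFC.sqrt_eq_real_sqrt _ hAA.nonneg, cfcₙ_eq_cfc, hAA.1.cfc_eq] at hsqrt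
  -- `traceNorm` is the eigendecomposition form of `CFC.sqrt (Aᴴ * A)`.
  rw [← hsqrt]
  rfl

theorem exists_posSemidef_sq_eq_conjTranspose_mul_self (A : Matrix m m ℂ) :
    ∃ N : Matrix m m ℂ, N.PosSemidef ∧ N ^ 2 = Aᴴ * A :=
  ⟨CFC.sqrt (Aᴴ * A), Matrix.nonneg_iff_posSemidef.mp (CFC.sqrt_nonneg _),
    CFC.sq_sqrt _ (Matrix.posSemidef_conjTranspose_mul_self A).nonneg⟩

theorem Matrix.PosSemidef.exists_eq_conjTranspose_mul_self {A : Matrix m m ℂ}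
    (hA : A.PosSemidef) : ∃ C : Matrix m m ℂ, A = Cᴴ * C := by
  refine ⟨CFC.sqrt A, ?_⟩
  rw [(Matrix.nonneg_iff_posSemidef.mp (CFC.sqrt_nonneg A)).1.eq, ← sq, CFC.sq_sqrt A hA.nonneg]

theorem traceNorm_eq_re_trace {A : Matrix m m ℂ} (hA : A.PosSemidef) :
    traceNorm A = A.trace.re :=
  traceNorm_eq_re_trace_of_sq_eq hA (by rw [hA.1.eq, sq])

end MatrixOrder

section tensorPow

variable {d : ℕ} (A B : Matrix (Fin d) (Fin d) ℂ) (n : ℕ)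

theorem tensorPow_mul : tensorPow A n * tensorPow B n = tensorPow (A * B) n := by
  ext x y
  simp only [tensorPow, Matrix.mul_apply, Matrix.of_apply, ← Finset.prod_mul_distrib]
  rw [← Fintype.piFinset_univ]
  exact (Finset.prod_univ_sum _ fun t s => A (x t) s * B s (y t)).symm

theorem tensorPow_pow_two : tensorPow A n ^ 2 = tensorPow (A ^ 2) n := by
  rw [sq, sq, tensorPow_mul]

theorem tensorPow_conjTranspose : (tensorPow A n)ᴴ = tensorPow Aᴴ n := by
  ext x y
  simp [tensorPow, Matrix.conjTranspose_apply]

theorem trace_tensorPow : (tensorPow A n).trace = A.trace ^ n := by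
  simp only [Matrix.trace, Matrix.diag_apply, tensorPow, Matrix.of_apply]
  rw [← Fintype.piFinset_univ, ← Fin.prod_const]
  exact (Finset.prod_univ_sum (fun _ => Finset.univ) fun _ j => A j j).symm

variable {A B}

theorem Matrix.PosSemidef.tensorPow (hA : A.PosSemidef) : (tensorPow A n).PosSemidef := by
  obtain ⟨C, rfl⟩ := hA.exists_eq_conjTranspose_mul_self
  rw [← tensorPow_mul, ← tensorPow_conjTranspose]
  exact Matrix.posSemidef_conjTranspose_mul_self _

theorem norm_tensorPow_apply_le_re (hAB : ∀ i j, ‖A i j‖ ≤ (B i j).re)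
    (hB : ∀ i j, (B i j).im = 0) (x y : Fin n → Fin d) :
    ‖tensorPow A n x y‖ ≤ (tensorPow B n x y).re := by
  have hBreal : tensorPow B n x y = ((∏ t, (B (x t) (y t)).re : ℝ) : ℂ) := by
    simp only [tensorPow, Matrix.of_apply, Complex.ofReal_prod]
    exact Finset.prod_congr rfl fun _ _ => Complex.ext (by simp) (by simp [hB])
  rw [hBreal, Complex.ofReal_re, tensorPow, Matrix.of_apply, norm_prod]
  exact Finset.prod_le_prod (fun _ _ => norm_nonneg _) fun _ _ => hAB _ _

theorem traceNorm_tensorPow : traceNorm (tensorPow A n) = traceNorm A ^ n := by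
  obtain ⟨N, hN, hNA⟩ := exists_posSemidef_sq_eq_conjTranspose_mul_self A
  have hNn : tensorPow N n ^ 2 = (tensorPow A n)ᴴ * tensorPow A n := by
    rw [tensorPow_pow_two, hNA, tensorPow_conjTranspose, tensorPow_mul]
  rw [traceNorm_eq_re_trace_of_sq_eq (hN.tensorPow n) hNn, traceNorm_eq_re_trace_of_sq_eq hN hNA,
    trace_tensorPow]
  have hreal : N.trace = (N.trace.re : ℂ) :=
    Complex.ext rfl (Complex.nonneg_iff.mp hN.trace_nonneg).2.symm
  rw [hreal, ← Complex.ofReal_pow, Complex.ofReal_re, Complex.ofReal_re]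

end tensorPow

/-- the matrices `A = [[1,1],[1,-1]]` and `B = [[1,1],[1,1]]` and their
tensor powers. -/
theorem hadamard_matrix_tensor_powers :
    traceNorm (!![1, 1; 1, -1] : Matrix (Fin 2) (Fin 2) ℂ) = 2 * Real.sqrt 2 ∧
    traceNorm (!![1, 1; 1, 1] : Matrix (Fin 2) (Fin 2) ℂ) = 2 ∧
    (∀ i j, ‖((!![1, 1; 1, -1] : Matrix (Fin 2) (Fin 2) ℂ) i j)‖ ≤
      ((!![1, 1; 1, 1] : Matrix (Fin 2) (Fin 2) ℂ) i j).re) ∧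
    ∀ n : ℕ, 1 ≤ n →
      (∀ x y : Fin n → Fin 2,
        ‖(tensorPow (!![1, 1; 1, -1]) n x y)‖ ≤ (tensorPow (!![1, 1; 1, 1]) n x y).re) ∧
      traceNorm (tensorPow (!![1, 1; 1, -1]) n) = (2 * Real.sqrt 2) ^ n ∧
      (2 * Real.sqrt 2) ^ n = (2 : ℝ) ^ ((n : ℝ) / 2) * traceNorm (tensorPow (!![1, 1; 1, 1]) n) := by
  set A : Matrix (Fin 2) (Fin 2) ℂ := !![1, 1; 1, -1]
  set B : Matrix (Fin 2) (Fin 2) ℂ := !![1, 1; 1, 1]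
  have hA : traceNorm A = 2 * Real.sqrt 2 := by
    have hsq : ((Real.sqrt 2 : ℂ) • (1 : Matrix (Fin 2) (Fin 2) ℂ)) ^ 2 = Aᴴ * A := by
      rw [smul_pow, one_pow, ← Complex.ofReal_pow, Real.sq_sqrt zero_le_two]
      ext i j; fin_cases i <;> fin_cases j <;> norm_num [A, Matrix.mul_apply]
    rw [traceNorm_eq_re_trace_of_sq_eq
      (Matrix.PosSemidef.one.smul (Complex.zero_le_real.mpr (Real.sqrt_nonneg 2))) hsq]
    simp [mul_comm]
  have hB : traceNorm B = 2 := by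
    have hfac : B = (!![1, 1; 0, 0] : Matrix (Fin 2) (Fin 2) ℂ)ᴴ * !![1, 1; 0, 0] := by
      ext i j; fin_cases i <;> fin_cases j <;> simp [B, Matrix.mul_apply]
    rw [traceNorm_eq_re_trace (hfac ▸ Matrix.posSemidef_conjTranspose_mul_self _)]
    norm_num [B, Matrix.trace_fin_two]
  have hAB : ∀ i j, ‖A i j‖ ≤ (B i j).re := by
    intro i j; fin_cases i <;> fin_cases j <;> simp [A, B]
  have hB_real : ∀ i j, (B i j).im = 0 := by
    intro i j; fin_cases i <;> fin_cases j <;> simp [B]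
  refine ⟨hA, hB, hAB, fun n _ => ⟨norm_tensorPow_apply_le_re n hAB hB_real, ?_, ?_⟩⟩
  · rw [traceNorm_tensorPow, hA]
  · rw [traceNorm_tensorPow, hB, Real.rpow_div_two_eq_sqrt _ zero_le_two, Real.rpow_natCast,
      mul_pow, mul_comm]
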